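/- arXiv:1508.02637 — 5 statements merged into one kernel-verified Lean document; each statement's English description precedes it below -/
import Mathlib

section
/- For every integer n ≥ 3 and every real number ε with 0 < ε < 1, one has Den₂ < 0; more precisely Den₂ = −(2/(n+1))·∑_{j=0}^{n−1} ε^j + (n(1−n)/(n+1))·ε^n + n·ε^{n−1}, and this quantity is strictly negative. -/
/-- Denominator of the quotient slope μ_{1−ε}(O_E,L) (up to n/2). -/
noncomputable def Den2 (n : ℕ) (ε : ℝ) : ℝ :=
  -(1 - ε ^ n) / (1 - ε) + (n : ℝ) * ε ^ (n - 1)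
    + (((n : ℝ) - 1) / ((n : ℝ) + 1)) * (1 - ε ^ (n + 1)) / (1 - ε) - ((n : ℝ) - 1) * ε ^ n

/-- Den₂ equals the displayed polynomial expression and is strictly negative. -/
theorem den2_eq_and_neg (n : ℕ) (hn : 3 ≤ n) (ε : ℝ) (h0 : 0 < ε) (h1 : ε < 1) :
    Den2 n ε = -(2 / ((n : ℝ) + 1)) * (∑ j ∈ Finset.range n, ε ^ j)
        + ((n : ℝ) * (1 - (n : ℝ)) / ((n : ℝ) + 1)) * ε ^ n + (n : ℝ) * ε ^ (n - 1) ∧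
      Den2 n ε < 0 := by
  obtain ⟨m, rfl⟩ : ∃ m, n = m + 2 := ⟨n - 2, by omega⟩
  have hε1 : ε ≠ 1 := ne_of_lt h1
  have hne : (1 : ℝ) - ε ≠ 0 := sub_ne_zero.mpr (Ne.symm hε1)
  have hne' : ε - 1 ≠ 0 := sub_ne_zero.mpr hε1
  have h1ε : 0 < 1 - ε := by linarith
  have hN : (0:ℝ) < (m:ℝ) + 2 + 1 := by positivity
  have heq : Den2 (m+2) ε
      = -(2 / (((m+2 : ℕ) : ℝ) + 1)) * (∑ j ∈ Finset.range (m+2), ε ^ j)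
        + (((m+2 : ℕ) : ℝ) * (1 - ((m+2 : ℕ) : ℝ)) / (((m+2 : ℕ) : ℝ) + 1)) * ε ^ (m+2)
        + ((m+2 : ℕ) : ℝ) * ε ^ (m+2-1) := by
    unfold Den2
    rw [geom_sum_eq hε1]
    push_cast
    field_simp
    ring
  refine ⟨heq, ?_⟩
  -- bound on powers
  have e1 : ε ^ (m+1) = ε ^ m * ε := pow_succ ε m
  have L : ∀ d, d ≤ m + 1 → ε ^ (m+1) + (d : ℝ) * ((1-ε) * ε ^ m) ≤ ε ^ (m+1-d) := by
    intro d
    induction d with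
    | zero => simp
    | succ d ih =>
      intro hd
      have hd' : d ≤ m + 1 := by omega
      have hstep : ε ^ m * (1-ε) ≤ ε ^ (m-d) * (1-ε) :=
        mul_le_mul_of_nonneg_right (pow_le_pow_of_le_one h0.le h1.le (by omega)) h1ε.le
      have hih := ih hd'
      rw [show m + 1 - d = (m - d) + 1 from by omega, pow_succ ε (m-d)] at hih
      rw [show m + 1 - (d+1) = m - d from by omega, e1] at *
      push_cast
      nlinarith [hih, hstep]
  have key : ∀ j ∈ Finset.range (m+2),
      ε ^ (m+1) + (((m:ℝ)+1) - (j:ℝ)) * ((1-ε) * ε ^ m) ≤ ε ^ j := by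
    intro j hj
    rw [Finset.mem_range] at hj
    have h := L (m+1-j) (by omega)
    rw [show m+1-(m+1-j) = j from by omega] at h
    have hc : ((m+1-j : ℕ) : ℝ) = ((m:ℝ)+1) - (j:ℝ) := by
      have : j ≤ m + 1 := by omega
      push_cast [this]
      ring
    rw [hc] at h
    exact h
  have gauss : ∑ j ∈ Finset.range (m+2), ((j:ℕ):ℝ) = ((m:ℝ)+1)*((m:ℝ)+2)/2 := by
    have h := Finset.sum_range_id_mul_two (m+2)
    have h2 : ((∑ i ∈ Finset.range (m+2), i : ℕ) : ℝ) * 2 = (((m+2) * (m+2-1) : ℕ) : ℝ) := by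
      exact_mod_cast congrArg (fun x : ℕ => (x : ℝ)) h
    push_cast [show m+2-1 = m+1 from rfl] at h2
    linarith [h2]
  have hS : ((m:ℝ)+2) * (ε ^ m * ε) + (((m:ℝ)+1)*((m:ℝ)+2)/2) * ((1-ε) * ε ^ m)
      ≤ ∑ j ∈ Finset.range (m+2), ε ^ j := by
    have hsum : ∑ j ∈ Finset.range (m+2), (ε ^ (m+1) + (((m:ℝ)+1) - (j:ℝ)) * ((1-ε) * ε ^ m))
        = ((m:ℝ)+2) * (ε ^ m * ε) + (((m:ℝ)+1)*((m:ℝ)+2)/2) * ((1-ε) * ε ^ m) := by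
      rw [Finset.sum_add_distrib, Finset.sum_const, Finset.card_range, ← Finset.sum_mul,
        Finset.sum_sub_distrib, Finset.sum_const, Finset.card_range, gauss, e1]
      ring
    calc ((m:ℝ)+2) * (ε ^ m * ε) + (((m:ℝ)+1)*((m:ℝ)+2)/2) * ((1-ε) * ε ^ m)
        = ∑ j ∈ Finset.range (m+2), (ε ^ (m+1) + (((m:ℝ)+1) - (j:ℝ)) * ((1-ε) * ε ^ m)) :=
          hsum.symm
      _ ≤ ∑ j ∈ Finset.range (m+2), ε ^ j := Finset.sum_le_sum key
  rw [heq]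
  set S := ∑ j ∈ Finset.range (m+2), ε ^ j with hSdef
  have e2 : ε ^ (m+2) = ε ^ m * ε * ε := by rw [pow_succ, pow_succ]
  have e3 : ε ^ (m+2-1) = ε ^ m * ε := by rw [show m+2-1 = m+1 from rfl, pow_succ]
  have hεm : (0:ℝ) < ε ^ m := pow_pos h0 m
  have hB : -2 * S + ((m:ℝ)+2)*(1-((m:ℝ)+2))*(ε ^ m * ε * ε)
      + ((m:ℝ)+2)*(((m:ℝ)+2)+1)*(ε ^ m * ε) < 0 := by
    have hprod : 0 < (((m:ℝ)+2)*((m:ℝ)+1)) * (ε ^ m * (1-ε)^2) := by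
      have h1 : (0:ℝ) < ((m:ℝ)+2)*((m:ℝ)+1) := by positivity
      have h2 : (0:ℝ) < ε ^ m * (1-ε)^2 := mul_pos hεm (pow_pos h1ε 2)
      exact mul_pos h1 h2
    nlinarith [hS, hprod]
  have hrw : -(2 / (((m+2 : ℕ) : ℝ) + 1)) * S
        + (((m+2 : ℕ) : ℝ) * (1 - ((m+2 : ℕ) : ℝ)) / (((m+2 : ℕ) : ℝ) + 1)) * ε ^ (m+2)
        + ((m+2 : ℕ) : ℝ) * ε ^ (m+2-1)
      = (-2 * S + ((m:ℝ)+2)*(1-((m:ℝ)+2))*(ε ^ m * ε * ε)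
          + ((m:ℝ)+2)*(((m:ℝ)+2)+1)*(ε ^ m * ε)) / (((m:ℝ)+2) + 1) := by
    rw [e2, e3]
    push_cast
    field_simp
  rw [hrw]
  exact div_neg_of_neg_of_pos hB (by positivity)
end

section
/- For every integer n ≥ 3 and every real number ε with 0 < ε < 1, the identity (1−ε)·(Num₂·Den₁ − Num₁·Den₂) = (n−1)·ε^{n−2}·(1−ε)·[ n(1−ε)²·F_n + ((n+1)ε − (n−2))·( F_n − ((n−1)/(n+1))·F_{n+1} ) ] holds. -/
noncomputable def Num1 (n : ℕ) (ε : ℝ) : ℝ :=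
  ((n : ℝ) + 1) * (1 - ε ^ (n - 1)) - ((n : ℝ) - 1) * ((n : ℝ) - 2) * ε ^ (n - 2) * (1 - ε)

noncomputable def Den1 (n : ℕ) (ε : ℝ) : ℝ :=
  1 - (n : ℝ) * ε ^ (n - 1) + ((n : ℝ) - 1) * ε ^ n

noncomputable def Num2 (n : ℕ) (ε : ℝ) : ℝ :=
  ((n : ℝ) - 1) * ε ^ (n - 2) * (1 - ε) - ((n : ℝ) - 1) * (1 - ε ^ (n - 1)) / (1 - ε)
    + ((n : ℝ) - 1) ^ 2 * ε ^ (n - 2) + ((n : ℝ) - 3) * (1 - ε ^ n) / (1 - ε)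
    - (n : ℝ) * ((n : ℝ) - 3) * ε ^ (n - 1)

/-- F_m := 1 − m ε^{m−1} + (m−1) ε^m. -/
noncomputable def F (m : ℕ) (ε : ℝ) : ℝ :=
  1 - (m : ℝ) * ε ^ (m - 1) + ((m : ℝ) - 1) * ε ^ m

/-- The key structural identity from the proof of Proposition 3.2. -/
theorem key_identity (n : ℕ) (hn : 3 ≤ n) (ε : ℝ) (h0 : 0 < ε) (h1 : ε < 1) :
    (1 - ε) * (Num2 n ε * Den1 n ε - Num1 n ε * Den2 n ε) =
      ((n : ℝ) - 1) * ε ^ (n - 2) * (1 - ε) *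
        ((n : ℝ) * (1 - ε) ^ 2 * F n ε +
          (((n : ℝ) + 1) * ε - ((n : ℝ) - 2)) *
            (F n ε - (((n : ℝ) - 1) / ((n : ℝ) + 1)) * F (n + 1) ε)) := by
  obtain ⟨k, rfl⟩ : ∃ k, n = k + 3 := ⟨n - 3, by omega⟩
  have hε : (1 : ℝ) - ε ≠ 0 := by linarith
  have hk : ((k : ℝ) + 3) + 1 ≠ 0 := by positivity
  unfold Num1 Den1 Num2 Den2 F
  push_cast
  field_simp
  ring
end

section
/- For every integer n ≥ 3 and every real number ε with 0 < ε < 1, one has n(1−ε)²·F_n + ((n+1)ε − (n−2))·( F_n − ((n−1)/(n+1))·F_{n+1} ) > 0. -/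
lemma F_step (k : ℕ) (ε : ℝ) :
    F (k + 3) ε = F (k + 2) ε + ((k : ℝ) + 2) * (1 - ε) ^ 2 * ε ^ (k + 1) := by
  simp only [F, show k + 3 - 1 = k + 2 from rfl, show k + 2 - 1 = k + 1 from rfl]
  push_cast
  ring

lemma F_lower (ε : ℝ) (h0 : 0 ≤ ε) (h1 : ε ≤ 1) :
    ∀ k : ℕ, (1 - ε) ^ 2 * (((k : ℝ) + 2) * ((k : ℝ) + 1) / 2) * ε ^ k ≤ F (k + 2) ε := by
  intro k
  induction k with
  | zero =>
    simp only [F]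
    norm_num
    nlinarith [sq_nonneg (1 - ε)]
  | succ k ih =>
    rw [show k + 1 + 2 = k + 3 from rfl, F_step]
    have hek : ε ^ (k + 1) ≤ ε ^ k := by
      calc ε ^ (k + 1) = ε ^ k * ε := by ring
      _ ≤ ε ^ k * 1 := by
          exact mul_le_mul_of_nonneg_left h1 (pow_nonneg h0 k)
      _ = ε ^ k := by ring
    have hk0 : (0:ℝ) ≤ (k:ℝ) := Nat.cast_nonneg k
    push_cast
    nlinarith [mul_nonneg (sq_nonneg (1 - ε)) (sub_nonneg.mpr hek), sq_nonneg (1 - ε),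
      mul_nonneg (mul_nonneg (sq_nonneg (1 - ε)) hk0) (sub_nonneg.mpr hek)]

set_option maxHeartbeats 1000000 in
/-- The key inequality from the proof of Proposition 3.2. -/
theorem key_positivity (n : ℕ) (hn : 3 ≤ n) (ε : ℝ) (h0 : 0 < ε) (h1 : ε < 1) :
    (n : ℝ) * (1 - ε) ^ 2 * F n ε +
      (((n : ℝ) + 1) * ε - ((n : ℝ) - 2)) *
        (F n ε - (((n : ℝ) - 1) / ((n : ℝ) + 1)) * F (n + 1) ε) > 0 := by
  obtain ⟨m, rfl⟩ : ∃ m, n = m + 3 := ⟨n - 3, by omega⟩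
  obtain ⟨M, hM⟩ : ∃ M : ℝ, M = (m : ℝ) := ⟨_, rfl⟩
  have hM0 : (0:ℝ) ≤ M := by rw [hM]; exact Nat.cast_nonneg m
  have hM4 : (0:ℝ) < M + 4 := by linarith
  have h1e : (0:ℝ) < 1 - ε := by linarith
  -- explicit forms of F
  have hFn : F (m + 3) ε = 1 - (M + 3) * (ε ^ (m + 1) * ε) + (M + 2) * (ε ^ (m + 1) * ε ^ 2) := by
    rw [hM]; simp only [F, show m + 3 - 1 = m + 2 from rfl]; push_cast; ring
  have hFn1 : F (m + 4) ε
      = 1 - (M + 4) * (ε ^ (m + 1) * ε ^ 2) + (M + 3) * (ε ^ (m + 1) * ε ^ 3) := by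
    rw [hM]; simp only [F, show m + 4 - 1 = m + 3 from rfl]; push_cast; ring
  -- lower bound for F (m+3)
  have hlow : (1 - ε) ^ 2 * ((M + 3) * (M + 2) / 2) * ε ^ (m + 1) ≤ F (m + 3) ε := by
    rw [hM]
    have := F_lower ε h0.le h1.le (m + 1)
    rw [show m + 1 + 2 = m + 3 from rfl] at this
    push_cast at this
    convert this using 2
    ring
  -- abbreviations
  obtain ⟨C, hCdef⟩ : ∃ C : ℝ,
      C = (M + 3) * (M + 4) * ε ^ 2 - 2 * ((M + 3) ^ 2 - 1) * ε + ((M + 3) ^ 2 - (M + 3) + 4) :=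
    ⟨_, rfl⟩
  obtain ⟨D, hDdef⟩ : ∃ D : ℝ,
      D = (1 - ε) ^ 2 * (M + 3) * (M + 2) * ε ^ (m + 1) * ε * ((M + 4) * ε - (M + 1)) :=
    ⟨_, rfl⟩
  obtain ⟨Lexpr, hLdef⟩ : ∃ L : ℝ,
      L = (M + 3) * (1 - ε) ^ 2 * F (m + 3) ε +
        ((M + 4) * ε - (M + 1)) * (F (m + 3) ε - ((M + 2) / (M + 4)) * F (m + 4) ε) :=
    ⟨_, rfl⟩
  -- key algebraic identity
  have key : (M + 4) * Lexpr = C * F (m + 3) ε - D := by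
    rw [hLdef, hCdef, hDdef, hFn, hFn1]
    field_simp
    ring
  -- positivity of C
  have hC : 0 < C := by
    have hp : 0 < (M + 3) * (M + 4) * C := by
      rw [hCdef]
      nlinarith [sq_nonneg ((M + 3) * (M + 4) * ε - ((M + 3) ^ 2 - 1)), hM0]
    by_contra hcon
    push_neg at hcon
    nlinarith [mul_nonneg (mul_nonneg (by linarith : (0:ℝ) ≤ M + 3) hM4.le)
      (neg_nonneg.mpr hcon)]
  -- combine
  have hlow' := mul_le_mul_of_nonneg_left hlow hC.le
  have hfact : C * ((1 - ε) ^ 2 * ((M + 3) * (M + 2) / 2) * ε ^ (m + 1)) - D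
      = (1 - ε) ^ 3 * ((M + 3) * (M + 2) / 2) * ε ^ (m + 1)
        * ((M ^ 2 + 5 * M + 10) - (M ^ 2 + 5 * M + 4) * ε) := by
    rw [hCdef, hDdef]; ring
  have hlast : 0 < (M ^ 2 + 5 * M + 10) - (M ^ 2 + 5 * M + 4) * ε := by
    nlinarith [mul_nonneg (by positivity : (0:ℝ) ≤ M ^ 2 + 5 * M + 4) h1e.le]
  have hpos : 0 < (1 - ε) ^ 3 * ((M + 3) * (M + 2) / 2) * ε ^ (m + 1)
      * ((M ^ 2 + 5 * M + 10) - (M ^ 2 + 5 * M + 4) * ε) :=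
    mul_pos (mul_pos (mul_pos (pow_pos h1e 3) (by positivity)) (pow_pos h0 _)) hlast
  have h3 : 0 < (M + 4) * Lexpr := by
    rw [key]; linarith
  have hL : 0 < Lexpr := by
    by_contra hcon
    push_neg at hcon
    linarith [mul_nonpos_of_nonneg_of_nonpos hM4.le hcon]
  -- finish: goal is Lexpr up to casts
  have hEq : ((m + 3 : ℕ) : ℝ) * (1 - ε) ^ 2 * F (m + 3) ε +
      ((((m + 3 : ℕ) : ℝ) + 1) * ε - (((m + 3 : ℕ) : ℝ) - 2)) *
        (F (m + 3) ε - ((((m + 3 : ℕ) : ℝ) - 1) / (((m + 3 : ℕ) : ℝ) + 1)) * F (m + 3 + 1) ε)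
      = Lexpr := by
    rw [hLdef, hM, show m + 3 + 1 = m + 4 from rfl]
    push_cast
    ring
  rw [← hEq] at hL
  exact hL
end

section
/- For every integer n ≥ 3 and every real number ε with 0 < ε < (n−2)/(n+1), one has [ n(ε − (n−1)/n)² + (5n−1)/(n(n+1)) ]·F_n − (3n(n−1)/(n+1))·ε^{n−1}(1−ε)² + n(n−1)·ε^{n−1}(1−ε)³ > 0. -/
lemma F_succ (k : ℕ) (ε : ℝ) :
    F (k + 2) ε = F (k + 1) ε + ((k : ℝ) + 1) * ε ^ k * (1 - ε) ^ 2 := by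
  simp only [F, Nat.add_sub_cancel]
  push_cast
  ring

lemma F_ge (ε : ℝ) (h0 : 0 ≤ ε) (h1 : ε ≤ 1) :
    ∀ k : ℕ, (((k : ℝ) + 2) * ((k : ℝ) + 1) / 2) * ε ^ k * (1 - ε) ^ 2 ≤ F (k + 2) ε := by
  intro k
  induction k with
  | zero =>
    simp only [F]
    norm_num
    nlinarith [sq_nonneg (1 - ε)]
  | succ k ih =>
    have h := F_succ (k + 1) ε
    simp only [show k + 1 + 1 = k + 2 from rfl] at h
    have hpow : ε ^ (k + 1) ≤ ε ^ k := pow_le_pow_of_le_one h0 h1 (Nat.le_succ k)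
    have key : (((k : ℝ) + 2) * ((k : ℝ) + 1) / 2) * (ε ^ (k + 1) * (1 - ε) ^ 2)
        ≤ (((k : ℝ) + 2) * ((k : ℝ) + 1) / 2) * (ε ^ k * (1 - ε) ^ 2) := by
      apply mul_le_mul_of_nonneg_left _ (by positivity)
      exact mul_le_mul_of_nonneg_right hpow (sq_nonneg _)
    rw [h]
    push_cast
    nlinarith [key, ih, sq_nonneg (1 - ε), pow_nonneg h0 (k + 1)]

/-- The inequality handling the range 0 < ε < (n−2)/(n+1) in the proof of Proposition 3.2. -/
theorem small_eps_positivity (n : ℕ) (hn : 3 ≤ n) (ε : ℝ) (h0 : 0 < ε)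
    (h1 : ε < ((n : ℝ) - 2) / ((n : ℝ) + 1)) :
    ((n : ℝ) * (ε - ((n : ℝ) - 1) / (n : ℝ)) ^ 2 + (5 * (n : ℝ) - 1) / ((n : ℝ) * ((n : ℝ) + 1)))
        * F n ε
      - (3 * (n : ℝ) * ((n : ℝ) - 1) / ((n : ℝ) + 1)) * ε ^ (n - 1) * (1 - ε) ^ 2
      + (n : ℝ) * ((n : ℝ) - 1) * ε ^ (n - 1) * (1 - ε) ^ 3 > 0 := by
  obtain ⟨k, rfl⟩ : ∃ k, n = k + 2 := ⟨n - 2, by omega⟩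
  set N : ℝ := ((k : ℝ) + 2) with hN
  have hNcast : ((k + 2 : ℕ) : ℝ) = N := by push_cast; rfl
  have hk1 : (1 : ℝ) ≤ (k : ℝ) := by
    have : 1 ≤ k := by omega
    exact_mod_cast this
  have hNpos : (0 : ℝ) < N := by rw [hN]; linarith
  have hN1 : (0 : ℝ) < N + 1 := by linarith
  have hN3 : (3 : ℝ) ≤ N := by rw [hN]; linarith
  rw [hNcast] at h1 ⊢
  have hceps : ε < (k : ℝ) / (N + 1) := by
    have hkN : N - 2 = (k : ℝ) := by rw [hN]; ring
    rwa [hkN] at h1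
  have heps1 : ε < 1 := by
    have hlt : (k : ℝ) / (N + 1) < 1 := by
      rw [div_lt_one hN1, hN]; linarith
    linarith
  have h1e : (0 : ℝ) < 1 - ε := by linarith
  have hexp : k + 2 - 1 = k + 1 := rfl
  rw [hexp]
  -- bound on A
  have hA : N * (ε - (N - 1) / N) ^ 2 + (5 * N - 1) / (N * (N + 1)) > (9 * N) / (N + 1) ^ 2 := by
    have hgap : (2 * N - 1) / (N * (N + 1)) < (N - 1) / N - ε := by
      have heq2 : (N - 1) / N - (k : ℝ) / (N + 1) = (2 * N - 1) / (N * (N + 1)) := by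
        have hne1 : ((k : ℝ) + 2) ≠ 0 := by positivity
        have hne2 : ((k : ℝ) + 2 + 1) ≠ 0 := by positivity
        rw [hN]; field_simp; ring
      linarith
    have hgap0 : (0 : ℝ) < (2 * N - 1) / (N * (N + 1)) := by
      exact div_pos (by linarith) (mul_pos hNpos hN1)
    have hsq : ((2 * N - 1) / (N * (N + 1))) ^ 2 < (ε - (N - 1) / N) ^ 2 := by
      have h1' : |(2 * N - 1) / (N * (N + 1))| < |ε - (N - 1) / N| := by
        rw [abs_of_pos hgap0, abs_sub_comm]
        calc (2 * N - 1) / (N * (N + 1)) < (N - 1) / N - ε := hgap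
          _ ≤ |(N - 1) / N - ε| := le_abs_self _
      calc ((2 * N - 1) / (N * (N + 1))) ^ 2 = |(2 * N - 1) / (N * (N + 1))| ^ 2 := by rw [sq_abs]
        _ < |ε - (N - 1) / N| ^ 2 := by
            apply pow_lt_pow_left₀ h1' (abs_nonneg _)
            norm_num
        _ = (ε - (N - 1) / N) ^ 2 := sq_abs _
    have heq : N * ((2 * N - 1) / (N * (N + 1))) ^ 2 + (5 * N - 1) / (N * (N + 1)) = (9 * N) / (N + 1) ^ 2 := by
      have hne1 : N ≠ 0 := ne_of_gt hNpos
      have hne2 : N + 1 ≠ 0 := ne_of_gt hN1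
      field_simp
      ring
    nlinarith [hsq]
  -- bound on F
  have hF := F_ge ε h0.le heps1.le k
  set B : ℝ := (((k : ℝ) + 2) * ((k : ℝ) + 1) / 2) * ε ^ k * (1 - ε) ^ 2 with hBdef
  have hB : (0 : ℝ) < B := by
    rw [hBdef]
    apply mul_pos (mul_pos _ (pow_pos h0 k)) (pow_pos h1e 2)
    have : (0 : ℝ) < (k : ℝ) + 2 := by linarith
    have : (0 : ℝ) < (k : ℝ) + 1 := by linarith
    positivity
  have hApos : (0 : ℝ) < (9 * N) / (N + 1) ^ 2 :=
    div_pos (by linarith) (pow_pos hN1 2)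
  have hAnn : (0 : ℝ) ≤ N * (ε - (N - 1) / N) ^ 2 + (5 * N - 1) / (N * (N + 1)) := by
    have h5 : (0 : ℝ) < (5 * N - 1) / (N * (N + 1)) :=
      div_pos (by linarith) (mul_pos hNpos hN1)
    have := mul_nonneg hNpos.le (sq_nonneg (ε - (N - 1) / N))
    linarith
  have hAF : (N * (ε - (N - 1) / N) ^ 2 + (5 * N - 1) / (N * (N + 1))) * F (k + 2) ε
      > ((9 * N) / (N + 1) ^ 2) * B := by
    calc ((9 * N) / (N + 1) ^ 2) * B
        < (N * (ε - (N - 1) / N) ^ 2 + (5 * N - 1) / (N * (N + 1))) * B :=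
          mul_lt_mul_of_pos_right hA hB
      _ ≤ (N * (ε - (N - 1) / N) ^ 2 + (5 * N - 1) / (N * (N + 1))) * F (k + 2) ε :=
          mul_le_mul_of_nonneg_left hF hAnn
  -- final algebraic step
  have hfinal : ((9 * N) / (N + 1) ^ 2) * B
      - 3 * N * (N - 1) / (N + 1) * ε ^ (k + 1) * (1 - ε) ^ 2
      + N * (N - 1) * ε ^ (k + 1) * (1 - ε) ^ 3
      = N * (N - 1) * ε ^ k * (1 - ε) ^ 2
        * ((9 * N) / (2 * (N + 1) ^ 2) + ε * ((k : ℝ) / (N + 1) - ε)) := by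
    rw [hBdef, hN]
    field_simp
    ring
  have hpos2 : (0 : ℝ) < N * (N - 1) * ε ^ k * (1 - ε) ^ 2
      * ((9 * N) / (2 * (N + 1) ^ 2) + ε * ((k : ℝ) / (N + 1) - ε)) := by
    have hN1' : (0 : ℝ) < N - 1 := by linarith
    have hterm : (0 : ℝ) < ε * ((k : ℝ) / (N + 1) - ε) :=
      mul_pos h0 (by linarith)
    have hbr : (0 : ℝ) < (9 * N) / (2 * (N + 1) ^ 2) + ε * ((k : ℝ) / (N + 1) - ε) := by
      have : (0 : ℝ) < (9 * N) / (2 * (N + 1) ^ 2) :=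
        div_pos (by linarith) (by positivity)
      linarith
    exact mul_pos (mul_pos (mul_pos (mul_pos hNpos hN1') (pow_pos h0 k)) (pow_pos h1e 2)) hbr
  rw [← hfinal] at hpos2
  linarith [hAF, hpos2]
end

section
/- Let n ≥ 3 be an integer, x = (x₁,…,x_n) ∈ ℝⁿ with x_i > 0 for all i and r := x₁+⋯+x_n < 1, set ρ := x₁+⋯+x_{n−1}, and let c ∈ ℝ satisfy 1 + ρ(1−ρ)c ≠ 0. Set A := (1 + (1−ρ)c)/(1 + ρ(1−ρ)c), and define the n×n matrix T by T_{ij} := 2(x_i δ_{ij} − x_i x_j A) for i, j ≤ n−1; T_{in} = T_{ni} := −2 x_i x_n (1 − ρA)/(1−ρ) for i ≤ n−1; and T_{nn} := (2x_n/(1−ρ))·(1 − ρ − x_n + x_n ρ(1−ρA)/(1−ρ)). Then T is the inverse of the Hessian matrix S, i.e. S·T = T·S = Id. -/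
set_option maxHeartbeats 1000000 in
private lemma aux_corner (xL ρ c A : ℝ) (h1 : 1 - (xL + ρ) ≠ 0) (h2 : 1 - ρ ≠ 0)
    (h3 : xL ≠ 0) (hD : 1 + ρ * (1 - ρ) * c ≠ 0)
    (hB : 1 - ρ * A = (1 - ρ) / (1 + ρ * (1 - ρ) * c)) :
    1 / 2 * (xL⁻¹ + 1 / (1 - (xL + ρ))) *
        (2 * xL / (1 - ρ) * (1 - ρ - xL + xL * ρ * (1 - ρ * A) / (1 - ρ)))
      + ρ * (1 / (1 - (xL + ρ)) * (-(xL * (1 - ρ * A)) / (1 - ρ))) = 1 := by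
  rw [hB]
  field_simp
  ring

set_option maxHeartbeats 1000000 in



/-- The inverse of the Hessian of the symplectic potential on the moment polytope of
Bl_{P¹}Pⁿ (Section 4.2.2 of the paper): S·T = T·S = Id. -/
theorem hessian_inverse (n : ℕ) (hn : 3 ≤ n) (x : Fin n → ℝ) (hx : ∀ i, 0 < x i)
    (r : ℝ) (hr : r = ∑ i, x i) (hr1 : r < 1)
    (ρ : ℝ) (hρ : ρ = ∑ i : Fin n, if (i : ℕ) < n - 1 then x i else 0)
    (c : ℝ) (hc : 1 + ρ * (1 - ρ) * c ≠ 0)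
    (A : ℝ) (hA : A = (1 + (1 - ρ) * c) / (1 + ρ * (1 - ρ) * c))
    (S : Matrix (Fin n) (Fin n) ℝ)
    (hS : ∀ i j, S i j =
      if (i : ℕ) < n - 1 ∧ (j : ℕ) < n - 1 then
        (1 / 2) * ((if i = j then (x i)⁻¹ else 0) + 1 / (1 - r) + c)
      else
        (1 / 2) * ((if i = j then (x i)⁻¹ else 0) + 1 / (1 - r)))
    (T : Matrix (Fin n) (Fin n) ℝ)
    (hT : ∀ i j, T i j =
      if (i : ℕ) < n - 1 ∧ (j : ℕ) < n - 1 then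
        2 * ((if i = j then x i else 0) - x i * x j * A)
      else if (i : ℕ) < n - 1 ∧ (j : ℕ) = n - 1 then
        -2 * x i * x j * (1 - ρ * A) / (1 - ρ)
      else if (j : ℕ) < n - 1 ∧ (i : ℕ) = n - 1 then
        -2 * x i * x j * (1 - ρ * A) / (1 - ρ)
      else
        (2 * x i / (1 - ρ)) * (1 - ρ - x i + x i * ρ * (1 - ρ * A) / (1 - ρ))) :
    S * T = 1 ∧ T * S = 1 := by
  have hn1 : n - 1 < n := by omega
  set L : Fin n := ⟨n - 1, hn1⟩ with hLdef
  have hLval : (L : ℕ) = n - 1 := rfl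
  have hne : ∀ k : Fin n, k ≠ L ↔ (k : ℕ) < n - 1 := by
    intro k
    rw [Ne, Fin.ext_iff, hLval]
    have := k.isLt
    omega
  set E := Finset.univ.erase L with hE
  have hmemE : ∀ k : Fin n, k ∈ E ↔ (k : ℕ) < n - 1 := by
    intro k
    rw [hE, Finset.mem_erase]
    simp [hne k]
  have hsum : ∀ f : Fin n → ℝ, ∑ k, f k = f L + ∑ k ∈ E, f k :=
    fun f => (Finset.add_sum_erase _ f (Finset.mem_univ L)).symm
  have hρE : ρ = ∑ k ∈ E, x k := by
    rw [hρ, hsum fun i => if (i : ℕ) < n - 1 then x i else 0]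
    rw [if_neg (by omega : ¬ ((L : ℕ) < n - 1)), zero_add]
    exact Finset.sum_congr rfl fun k hk => if_pos ((hmemE k).1 hk)
  have hrL : r = x L + ρ := by rw [hr, hsum x, hρE]
  have h1r : (0:ℝ) < 1 - r := by linarith
  have h1ρ : (0:ℝ) < 1 - ρ := by have := hx L; linarith [hrL]
  have h1rne : (1:ℝ) - (x L + ρ) ≠ 0 := by rw [← hrL]; exact ne_of_gt h1r
  have h1ρne : (1:ℝ) - ρ ≠ 0 := ne_of_gt h1ρ
  have hxne : ∀ i, x i ≠ 0 := fun i => ne_of_gt (hx i)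
  have hLn : ¬ ((L : ℕ) < n - 1) := by omega
  have hB : 1 - ρ * A = (1 - ρ) / (1 + ρ * (1 - ρ) * c) := by
    rw [hA]; field_simp; ring
  have hST : S * T = 1 := by
    ext i j
    rw [Matrix.mul_apply, Matrix.one_apply, hsum fun k => S i k * T k j]
    by_cases hi : i = L
    · subst hi
      by_cases hj : j = L
      · subst hj
        -- diagonal corner entry
        have hSLL : S L L = (1/2) * ((x L)⁻¹ + 1 / (1 - r)) := by
          rw [hS, if_neg (fun h => hLn h.1), if_pos rfl]
        have hTLL : T L L = (2 * x L / (1 - ρ)) *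
            (1 - ρ - x L + x L * ρ * (1 - ρ * A) / (1 - ρ)) := by
          rw [hT, if_neg (fun h => hLn h.1), if_neg (fun h => hLn h.1),
            if_neg (fun h => hLn h.1)]
        have hsum4 : ∑ k ∈ E, S L k * T k L =
            ρ * ((1 / (1 - r)) * (- (x L * (1 - ρ * A)) / (1 - ρ))) := by
          have hterm : ∀ k ∈ E, S L k * T k L =
              x k * ((1 / (1 - r)) * (- (x L * (1 - ρ * A)) / (1 - ρ))) := by
            intro k hk
            have hk' := (hmemE k).1 hk
            have hLk : ¬ (L = k) := fun h => (hne k).2 hk' h.symm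
            rw [hS, hT, if_neg (fun h => hLn h.1), if_neg hLk,
              if_neg (fun h => hLn h.2), if_pos ⟨hk', hLval⟩]
            ring
          rw [Finset.sum_congr rfl hterm, ← Finset.sum_mul, ← hρE]
        rw [hSLL, hTLL, hsum4, if_pos rfl, hrL]
        exact aux_corner (x L) ρ c A h1rne h1ρne (hxne L) hc hB
      · -- i = L, j ≠ L : entry 0
        have hj' : (j : ℕ) < n - 1 := (hne j).1 hj
        have hSLL : S L L = (1/2) * ((x L)⁻¹ + 1 / (1 - r)) := by
          rw [hS, if_neg (fun h => hLn h.1), if_pos rfl]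
        have hTLj : T L j = -2 * x L * x j * (1 - ρ * A) / (1 - ρ) := by
          rw [hT, if_neg (fun h => hLn h.1), if_neg (fun h => hLn h.1),
            if_pos ⟨hj', hLval⟩]
        have hterm : ∀ k ∈ E, S L k * T k j =
            (if k = j then (1 / (1 - r)) * x k else 0)
            - x k * ((1 / (1 - r)) * (x j * A)) := by
          intro k hk
          have hk' := (hmemE k).1 hk
          have hLk : ¬ (L = k) := fun h => (hne k).2 hk' h.symm
          rw [hS, hT, if_neg (fun h => hLn h.1), if_neg hLk, if_pos ⟨hk', hj'⟩]
          split_ifs <;> ring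
        have hsum3 : ∑ k ∈ E, S L k * T k j =
            (1 / (1 - r)) * x j - ρ * ((1 / (1 - r)) * (x j * A)) := by
          rw [Finset.sum_congr rfl hterm, Finset.sum_sub_distrib,
            Finset.sum_ite_eq' E j _, if_pos ((hmemE j).2 hj'),
            ← Finset.sum_mul, ← hρE]
        have hLj : ¬ (L = j) := fun h => hj h.symm
        rw [hSLL, hTLj, hsum3, if_neg hLj, hrL, hB, hA]
        field_simp [hxne j, hxne L, h1rne, h1ρne, hc]
        ring
    · have hi' : (i : ℕ) < n - 1 := (hne i).1 hi
      have hSiL : S i L = (1/2) * (0 + 1 / (1 - r)) := by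
        rw [hS, if_neg (fun h => hLn h.2), if_neg hi]
      by_cases hj : j = L
      · subst hj
        -- i ≠ L, j = L : entry 0
        have hTLL : T L L = (2 * x L / (1 - ρ)) *
            (1 - ρ - x L + x L * ρ * (1 - ρ * A) / (1 - ρ)) := by
          rw [hT, if_neg (fun h => hLn h.1), if_neg (fun h => hLn h.1),
            if_neg (fun h => hLn h.1)]
        have hterm : ∀ k ∈ E, S i k * T k L =
            (if i = k then -((x i)⁻¹ * (x k * (x L * (1 - ρ * A))) / (1 - ρ)) else 0)
            - x k * ((1 / (1 - r) + c) * (x L * (1 - ρ * A)) / (1 - ρ)) := by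
          intro k hk
          have hk' := (hmemE k).1 hk
          have c1 : ¬ ((k : ℕ) < n - 1 ∧ (L : ℕ) < n - 1) := fun h => hLn h.2
          have c2 : (k : ℕ) < n - 1 ∧ (L : ℕ) = n - 1 := ⟨hk', hLval⟩
          have c0 : (i : ℕ) < n - 1 ∧ (k : ℕ) < n - 1 := ⟨hi', hk'⟩
          rw [hS, hT, if_pos c0, if_neg c1, if_pos c2]
          split_ifs <;> ring
        have hsum2 : ∑ k ∈ E, S i k * T k L =
            -((x i)⁻¹ * (x i * (x L * (1 - ρ * A))) / (1 - ρ))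
            - ρ * ((1 / (1 - r) + c) * (x L * (1 - ρ * A)) / (1 - ρ)) := by
          rw [Finset.sum_congr rfl hterm, Finset.sum_sub_distrib,
            Finset.sum_ite_eq E i _, if_pos ((hmemE i).2 hi'),
            ← Finset.sum_mul, ← hρE]
        rw [hSiL, hTLL, hsum2, if_neg hi, hrL, hB]
        field_simp [hxne i, hxne L, h1rne, h1ρne, hc]
        ring
      · -- i ≠ L, j ≠ L : main block
        have hj' : (j : ℕ) < n - 1 := (hne j).1 hj
        have hTLj : T L j = -2 * x L * x j * (1 - ρ * A) / (1 - ρ) := by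
          rw [hT, if_neg (fun h => hLn h.1), if_neg (fun h => hLn h.1),
            if_pos ⟨hj', hLval⟩]
        have hterm : ∀ k ∈ E, S i k * T k j =
            (if i = k then (x i)⁻¹ * ((if k = j then x k else 0) - x k * x j * A) else 0)
            + ((if k = j then (1 / (1 - r) + c) * x k else 0)
              - x k * ((1 / (1 - r) + c) * (x j * A))) := by
          intro k hk
          have hk' := (hmemE k).1 hk
          have c0 : (i : ℕ) < n - 1 ∧ (k : ℕ) < n - 1 := ⟨hi', hk'⟩
          have c1 : (k : ℕ) < n - 1 ∧ (j : ℕ) < n - 1 := ⟨hk', hj'⟩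
          rw [hS, hT, if_pos c0, if_pos c1]
          split_ifs <;> ring
        have hsum1 : ∑ k ∈ E, S i k * T k j =
            (x i)⁻¹ * ((if i = j then x i else 0) - x i * x j * A)
            + ((1 / (1 - r) + c) * x j - ρ * ((1 / (1 - r) + c) * (x j * A))) := by
          rw [Finset.sum_congr rfl hterm, Finset.sum_add_distrib,
            Finset.sum_ite_eq E i _, if_pos ((hmemE i).2 hi'),
            Finset.sum_sub_distrib,
            Finset.sum_ite_eq' E j _, if_pos ((hmemE j).2 hj'),
            ← Finset.sum_mul, ← hρE]
        rw [hSiL, hTLj, hsum1]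
        by_cases hij : i = j
        · rw [if_pos hij, if_pos hij, hrL, hB, hA]
          subst hij
          field_simp [hxne i, hxne L, h1rne, h1ρne, hc]
          ring
        · rw [if_neg hij, if_neg hij, hrL, hB, hA]
          field_simp [hxne i, hxne j, hxne L, h1rne, h1ρne, hc]
          ring
  refine ⟨hST, ?_⟩
  have hSt : S.transpose = S := by
    ext i j
    rw [Matrix.transpose_apply, hS, hS]
    by_cases hij : i = j
    · subst hij; rfl
    · have hji : ¬ (j = i) := fun h => hij h.symm
      by_cases hi : (i : ℕ) < n - 1 <;> by_cases hj : (j : ℕ) < n - 1 <;>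
        simp [hi, hj, hij, hji]
  have hTt : T.transpose = T := by
    ext i j
    rw [Matrix.transpose_apply, hT, hT]
    by_cases hij : i = j
    · subst hij; rfl
    · have hji : ¬ (j = i) := fun h => hij h.symm
      have hi2 := i.isLt
      have hj2 := j.isLt
      by_cases hi : (i : ℕ) < n - 1 <;> by_cases hj : (j : ℕ) < n - 1
      · have c1 : (j : ℕ) < n - 1 ∧ (i : ℕ) < n - 1 := ⟨hj, hi⟩
        have c2 : (i : ℕ) < n - 1 ∧ (j : ℕ) < n - 1 := ⟨hi, hj⟩
        rw [if_pos c1, if_pos c2, if_neg hji, if_neg hij]; ring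
      · have hj' : (j : ℕ) = n - 1 := by omega
        rw [if_neg (fun h => hj h.1), if_neg (fun h => hj h.1),
          if_pos ⟨hi, hj'⟩, if_neg (fun h => hj h.2), if_pos ⟨hi, hj'⟩]
        ring
      · have hi'' : (i : ℕ) = n - 1 := by omega
        rw [if_neg (fun h => hi h.2), if_pos ⟨hj, hi''⟩,
          if_neg (fun h => hi h.1), if_neg (fun h => hi h.1), if_pos ⟨hj, hi''⟩]
        ring
      · exfalso; exact hij (Fin.ext (by omega))
  have : T * S = (S * T).transpose := by rw [Matrix.transpose_mul, hSt, hTt]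
  rw [this, hST, Matrix.transpose_one]
end
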